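/- For any finite poset Q and the 3-element antichain A3, the induced saturation number sat*(n, Q * A3) tends to infinity as n tends to infinity, where Q * A3 is the glued poset with every element of A3 strictly below every element of Q. -/

import Mathlib

/-!
Let `𝒜` be `A₃ * Q`-saturated and call `S` free if no three pairwise incomparable members of
`𝒜` lie below `S`. Deleting from `[n]` one point of every antichain of size three of `𝒜` leaves
a free set of size at least `n - |𝒜|³`; it extends to a maximal free set `M`, and saturation
forces `M ∈ 𝒜`. A free `S ∉ 𝒜` can only enter the new copy of `A₃ * Q` as an antichain element
below a copy of `Q` in `𝒜`. So for a free `U ∈ 𝒜`, after fixing a set `H` of at most `|𝒜|^|Q|`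
points of `U`, one outside the meet of each copy of `Q` not above `U`, every `S` with
`⋃ {B ∈ 𝒜 : B ⊂ U} ∪ H ⊆ S ⊆ U` is in `𝒜`; hence fewer than `|𝒜|` further points of `U` lie
outside that union. Covering `M` by the new points of the members of `𝒜` below it gives
`|M| ≤ |𝒜| (|𝒜|^|Q| + |𝒜|)`, which bounds `n` in terms of `|𝒜|`.
-/

open Finset Filter

/-- An induced copy of the poset `α` inside the family `𝒜` of subsets of `Fin n`
(representing `[n] = {1,…,n}`): an injective map `f : α → Finset (Fin n)` with image
contained in `𝒜` such that `a ≤ b ↔ f a ⊆ f b`. -/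
def IsInducedCopy {α : Type*} [PartialOrder α] {n : ℕ}
    (𝒜 : Finset (Finset (Fin n))) (f : α → Finset (Fin n)) : Prop :=
  Function.Injective f ∧ (∀ a, f a ∈ 𝒜) ∧ ∀ a b : α, a ≤ b ↔ f a ⊆ f b

/-- The family `𝒜` contains an induced copy of the poset `α`. -/
def ContainsCopy (α : Type*) [PartialOrder α] {n : ℕ}
    (𝒜 : Finset (Finset (Fin n))) : Prop :=
  ∃ f : α → Finset (Fin n), IsInducedCopy 𝒜 f

/-- `𝒜` is an `α`-saturated family: it contains no induced copy of `α`, but adding any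
set not in `𝒜` creates an induced copy of `α`. -/
def IsSaturatedFamily (α : Type*) [PartialOrder α] {n : ℕ}
    (𝒜 : Finset (Finset (Fin n))) : Prop :=
  ¬ ContainsCopy α 𝒜 ∧
    ∀ S : Finset (Fin n), S ∉ 𝒜 → ContainsCopy α (insert S 𝒜)

/-- The induced saturation number `sat*(n, α)`: the minimum size of an `α`-saturated
family of subsets of `[n]`. -/
noncomputable def satStar (α : Type*) [PartialOrder α] (n : ℕ) : ℕ :=
  sInf {k : ℕ | ∃ 𝒜 : Finset (Finset (Fin n)), IsSaturatedFamily α 𝒜 ∧ 𝒜.card = k}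

/-- The $3$-element antichain. -/
def Antichain3 : Type := Fin 3

instance : PartialOrder Antichain3 where
  le x y := x = y
  le_refl _ := rfl
  le_trans _ _ _ h1 h2 := Eq.trans h1 h2
  le_antisymm _ _ h _ := h

instance : Fintype Antichain3 := inferInstanceAs (Fintype (Fin 3))

instance : DecidableEq Antichain3 := inferInstanceAs (DecidableEq (Fin 3))

instance : Inhabited Antichain3 := inferInstanceAs (Inhabited (Fin 3))

theorem Antichain3.card : Fintype.card Antichain3 = 3 := Fintype.card_fin 3

theorem Antichain3.le_iff_eq {i j : Antichain3} : i ≤ j ↔ i = j := Iff.rfl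

instance : NoTopOrder Antichain3 :=
  ⟨fun (i : Fin 3) => ⟨show Fin 3 from i + 1,
    fun h => (show ∀ j : Fin 3, j + 1 ≠ j by decide) i (Antichain3.le_iff_eq.1 h)⟩⟩

section InducedCopy

variable {α γ : Type*} [PartialOrder α] [PartialOrder γ] {n : ℕ}
  {𝒜 ℬ : Finset (Finset (Fin n))} {f : α → Finset (Fin n)} {S : Finset (Fin n)}

theorem IsInducedCopy.mono (h𝒜ℬ : 𝒜 ⊆ ℬ) (hf : IsInducedCopy 𝒜 f) : IsInducedCopy ℬ f :=
  ⟨hf.1, fun a => h𝒜ℬ (hf.2.1 a), hf.2.2⟩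

theorem IsInducedCopy.of_insert (hf : IsInducedCopy (insert S 𝒜) f) (hS : ∀ a, f a ≠ S) :
    IsInducedCopy 𝒜 f :=
  ⟨hf.1, fun a => (mem_insert.1 (hf.2.1 a)).resolve_left (hS a), hf.2.2⟩

theorem IsInducedCopy.mem_of_ne (hf : IsInducedCopy (insert S 𝒜) f) {a b : α} (ha : f a = S)
    (hb : b ≠ a) : f b ∈ 𝒜 :=
  (mem_insert.1 (hf.2.1 b)).resolve_left fun h => hb (hf.1 (h.trans ha.symm))

theorem IsInducedCopy.filter (P : Finset (Fin n) → Prop) [DecidablePred P]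
    (hf : IsInducedCopy 𝒜 f) (hP : ∀ a, P (f a)) : IsInducedCopy (𝒜.filter P) f :=
  ⟨hf.1, fun a => mem_filter.2 ⟨hf.2.1 a, hP a⟩, hf.2.2⟩

theorem IsInducedCopy.comp (hf : IsInducedCopy 𝒜 f) (e : γ ↪o α) : IsInducedCopy 𝒜 (f ∘ e) :=
  ⟨hf.1.comp e.injective, fun c => hf.2.1 (e c), fun _ _ => e.le_iff_le.symm.trans (hf.2.2 _ _)⟩

theorem ContainsCopy.mono (h𝒜ℬ : 𝒜 ⊆ ℬ) (h : ContainsCopy α 𝒜) : ContainsCopy α ℬ :=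
  let ⟨f, hf⟩ := h; ⟨f, hf.mono h𝒜ℬ⟩

/-- `NoTopOrder α` rules out `g b ⊆ f a`: some `f a'` with `a' ≰ a` lies below `g b`. -/
theorem IsInducedCopy.sumLex {β : Type*} [PartialOrder β] [NoTopOrder α]
    {g : β → Finset (Fin n)} (hf : IsInducedCopy 𝒜 f) (hg : IsInducedCopy 𝒜 g)
    (hfg : ∀ a b, f a ⊆ g b) : IsInducedCopy 𝒜 (fun x : α ⊕ₗ β => Sum.elim f g (ofLex x)) := by
  have hgf : ∀ a b, ¬ g b ⊆ f a := fun a b hba =>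
    let ⟨a', ha'⟩ := exists_not_le a
    ha' ((hf.2.2 a' a).2 ((hfg a' b).trans hba))
  refine ⟨?_, ?_, ?_⟩
  · rintro (a | b) (a' | b') h
    · exact congrArg _ (hf.1 h)
    · exact absurd (subset_of_eq h.symm) (hgf a b')
    · exact absurd (subset_of_eq h) (hgf a' b)
    · exact congrArg _ (hg.1 h)
  · rintro (a | b)
    exacts [hf.2.1 a, hg.2.1 b]
  · rintro (a | b) (a' | b')
    · exact Sum.Lex.inl_le_inl_iff.trans (hf.2.2 a a')
    · exact iff_of_true (Sum.Lex.inl_le_inr a b') (hfg a b')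
    · exact iff_of_false Sum.Lex.not_inr_le_inl (hgf a' b)
    · exact Sum.Lex.inr_le_inr_iff.trans (hg.2.2 b b')

theorem Antichain3.isInducedCopy_iff {g : Antichain3 → Finset (Fin n)} :
    IsInducedCopy 𝒜 g ↔ (∀ i, g i ∈ 𝒜) ∧ ∀ i j, i ≠ j → ¬ g i ⊆ g j := by
  refine ⟨fun hg => ⟨hg.2.1, fun i j hij h => hij ((hg.2.2 i j).2 h)⟩,
    fun ⟨hmem, hinc⟩ => ⟨fun i j h => ?_, hmem, fun i j => ?_⟩⟩
  · by_contra hij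
    exact hinc i j hij (h ▸ subset_refl _)
  · refine ⟨fun h => h ▸ subset_refl _, fun h => ?_⟩
    by_contra hij
    exact hinc i j hij h

end InducedCopy

section Counting

variable {α : Type*} [PartialOrder α] [Fintype α] [DecidableEq α] {n : ℕ}

open scoped Classical in
noncomputable def inducedCopies (α : Type*) [PartialOrder α] [Fintype α] [DecidableEq α]
    (𝒜 : Finset (Finset (Fin n))) : Finset (α → Finset (Fin n)) :=
  (Fintype.piFinset fun _ => 𝒜).filter (IsInducedCopy 𝒜)

theorem mem_inducedCopies {𝒜 : Finset (Finset (Fin n))} {f : α → Finset (Fin n)} :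
    f ∈ inducedCopies α 𝒜 ↔ IsInducedCopy 𝒜 f := by
  classical
  simp only [inducedCopies, mem_filter, Fintype.mem_piFinset, and_iff_right_iff_imp]
  exact fun hf => hf.2.1

theorem card_inducedCopies_le (𝒜 : Finset (Finset (Fin n))) :
    #(inducedCopies α 𝒜) ≤ #𝒜 ^ Fintype.card α := by
  classical
  calc #(inducedCopies α 𝒜) ≤ #(Fintype.piFinset fun _ : α => 𝒜) := card_filter_le _ _
    _ = #𝒜 ^ Fintype.card α := by simp

end Counting

theorem Finset.exists_card_le_forall_inter_nonempty {ι β : Type*} [DecidableEq β]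
    (s : Finset ι) (t : ι → Finset β) (ht : ∀ i ∈ s, (t i).Nonempty) :
    ∃ H ⊆ s.biUnion t, #H ≤ #s ∧ ∀ i ∈ s, (H ∩ t i).Nonempty := by
  choose x hx using ht
  refine ⟨s.attach.image fun i => x i.1 i.2, ?_, card_image_le.trans card_attach.le, ?_⟩
  · simp only [image_subset_iff, mem_attach, forall_const, Subtype.forall, mem_biUnion]
    exact fun i hi => ⟨i, hi, hx i hi⟩
  · exact fun i hi => ⟨x i hi, mem_inter.2 ⟨mem_image_of_mem _ (mem_attach _ ⟨i, hi⟩), hx i hi⟩⟩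

section UnionBelow

variable {n : ℕ} {𝒜 : Finset (Finset (Fin n))} {B U : Finset (Fin n)}

def unionBelow (𝒜 : Finset (Finset (Fin n))) (U : Finset (Fin n)) : Finset (Fin n) :=
  (𝒜.filter (· ⊂ U)).biUnion id

theorem mem_unionBelow {x : Fin n} : x ∈ unionBelow 𝒜 U ↔ ∃ B ∈ 𝒜, B ⊂ U ∧ x ∈ B := by
  simp [unionBelow, and_assoc]

theorem subset_unionBelow (hB : B ∈ 𝒜) (hBU : B ⊂ U) : B ⊆ unionBelow 𝒜 U :=
  fun _ hx => mem_unionBelow.2 ⟨B, hB, hBU, hx⟩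

theorem unionBelow_subset : unionBelow 𝒜 U ⊆ U := fun _ hx =>
  let ⟨_, _, hBU, hxB⟩ := mem_unionBelow.1 hx; hBU.subset hxB

/-- Each point of `U` is new in a minimal member of `𝒜` containing it. -/
theorem subset_biUnion_sdiff_unionBelow (hU : U ∈ 𝒜) :
    U ⊆ (𝒜.filter (· ⊆ U)).biUnion fun B => B \ unionBelow 𝒜 B := by
  intro x hx
  obtain ⟨B, ⟨hB, hBU, hxB⟩, hmin⟩ :=
    exists_minimal_of_wellFoundedLT (fun B => B ∈ 𝒜 ∧ B ⊆ U ∧ x ∈ B) ⟨U, hU, subset_rfl, hx⟩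
  refine mem_biUnion.2 ⟨B, mem_filter.2 ⟨hB, hBU⟩, mem_sdiff.2 ⟨hxB, fun hxV => ?_⟩⟩
  obtain ⟨C, hC, hCB, hxC⟩ := mem_unionBelow.1 hxV
  exact hCB.not_subset (hmin ⟨hC, hCB.subset.trans hBU, hxC⟩ hCB.subset)

end UnionBelow

section Saturated

variable {n : ℕ} {𝒜 : Finset (Finset (Fin n))} {S U : Finset (Fin n)}

def Antichain3FreeBelow (𝒜 : Finset (Finset (Fin n))) (S : Finset (Fin n)) : Prop :=
  ¬ ContainsCopy Antichain3 (𝒜.filter (· ⊆ S))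

theorem Antichain3FreeBelow.mono (hSU : S ⊆ U) (hU : Antichain3FreeBelow 𝒜 U) :
    Antichain3FreeBelow 𝒜 S :=
  fun h => hU (h.mono fun _ hB =>
    mem_filter.2 ⟨(mem_filter.1 hB).1, (mem_filter.1 hB).2.trans hSU⟩)

variable {Q : Type*} [PartialOrder Q] [Fintype Q]

theorem antichain3FreeBelow_inf (hsat : IsSaturatedFamily (Antichain3 ⊕ₗ Q) 𝒜)
    {h : Q → Finset (Fin n)} (hh : IsInducedCopy 𝒜 h) :
    Antichain3FreeBelow 𝒜 (univ.inf h) := by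
  rintro ⟨g, hg⟩
  refine hsat.1 ⟨_, (hg.mono (filter_subset _ _)).sumLex hh fun i p => ?_⟩
  exact (mem_filter.1 (hg.2.1 i)).2.trans (inf_le (mem_univ p))

/-- `S` cannot sit in the `Q`-part of the new copy: the antichain part would then lie in `𝒜`
below `S`. -/
theorem exists_copies_of_notMem (hsat : IsSaturatedFamily (Antichain3 ⊕ₗ Q) 𝒜)
    (hS : S ∉ 𝒜) (hfree : Antichain3FreeBelow 𝒜 S) :
    ∃ (h : Q → Finset (Fin n)) (g : Antichain3 → Finset (Fin n)) (i : Antichain3),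
      IsInducedCopy 𝒜 h ∧ IsInducedCopy (insert S 𝒜) g ∧ g i = S ∧
        ∀ j, g j ⊆ univ.inf h := by
  obtain ⟨F, hF⟩ := hsat.2 S hS
  have hinl := hF.comp (OrderEmbedding.ofMapLEIff (fun i : Antichain3 => toLex (Sum.inl i))
    fun _ _ => Sum.Lex.inl_le_inl_iff)
  have hinr := hF.comp (OrderEmbedding.ofMapLEIff (fun p : Q => toLex (Sum.inr p))
    fun _ _ => Sum.Lex.inr_le_inr_iff)
  have hlow : ∀ i p, F (toLex (Sum.inl i)) ⊆ F (toLex (Sum.inr p)) := fun i p =>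
    (hF.2.2 _ _).1 (Sum.Lex.inl_le_inr i p)
  obtain ⟨x, hx⟩ : ∃ x, F x = S := by
    by_contra! hne
    exact hsat.1 ⟨F, hF.of_insert hne⟩
  rcases x with i | p
  · refine ⟨_, _, i, hinr.of_insert fun p hp => ?_, hinl, hx,
      fun j => Finset.le_inf fun p _ => hlow j p⟩
    exact Sum.inr_ne_inl (hF.1 (hp.trans hx.symm))
  · refine absurd ⟨_, (hinl.of_insert fun i hi => ?_).filter _ fun i => hx ▸ hlow i p⟩ hfree
    exact Sum.inl_ne_inr (hF.1 (hi.trans hx.symm))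

theorem mem_of_maximal_antichain3FreeBelow (hsat : IsSaturatedFamily (Antichain3 ⊕ₗ Q) 𝒜)
    (hU : Maximal (Antichain3FreeBelow 𝒜) U) : U ∈ 𝒜 := by
  by_contra hU𝒜
  obtain ⟨h, g, i, hh, hg, rfl, hgh⟩ := exists_copies_of_notMem hsat hU𝒜 hU.1
  obtain ⟨j, hji⟩ := exists_not_le i
  have hinf : g i = univ.inf h := hU.eq_of_le (antichain3FreeBelow_inf hsat hh) (hgh i)
  exact hji ((hg.2.2 j i).2 (hinf.symm ▸ hgh j))

theorem Antichain3.isInducedCopy_update {ℬ : Finset (Finset (Fin n))}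
    {g : Antichain3 → Finset (Fin n)} (hg : IsInducedCopy ℬ g) (i : Antichain3)
    (hU : U ∈ 𝒜) (hmem : ∀ j ≠ i, g j ∈ 𝒜) (hinc : ∀ j ≠ i, ¬ U ⊆ g j ∧ ¬ g j ⊆ U) :
    IsInducedCopy 𝒜 (Function.update g i U) := by
  obtain ⟨-, hg⟩ := Antichain3.isInducedCopy_iff.1 hg
  refine Antichain3.isInducedCopy_iff.2 ⟨fun j => ?_, fun j k hjk => ?_⟩
  · rw [Function.update_apply]
    split_ifs with hj
    exacts [hU, hmem j hj]
  · rw [Function.update_apply, Function.update_apply]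
    split_ifs with hj hk hk
    · exact absurd (hj.trans hk.symm) hjk
    · exact (hinc k hk).1
    · exact (hinc j hj).2
    · exact hg j k hjk

/-- Every `S` between `unionBelow 𝒜 U ∪ H` and `U` must be in `𝒜`: otherwise the antichain
completed by `S` could be moved up to `U`, below the same copy of `Q`. -/
theorem mem_of_unionBelow_union_subset (hsat : IsSaturatedFamily (Antichain3 ⊕ₗ Q) 𝒜)
    (hU : U ∈ 𝒜) (hfree : Antichain3FreeBelow 𝒜 U) {H : Finset (Fin n)}
    (hH : ∀ h : Q → Finset (Fin n), IsInducedCopy 𝒜 h → H ⊆ univ.inf h → U ⊆ univ.inf h)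
    (hVS : unionBelow 𝒜 U ∪ H ⊆ S) (hSU : S ⊆ U) : S ∈ 𝒜 := by
  by_contra hS
  obtain ⟨h, g, i, hh, hg, rfl, hgh⟩ := exists_copies_of_notMem hsat hS (hfree.mono hSU)
  have hUh : U ⊆ univ.inf h := hH h hh (subset_union_right.trans (hVS.trans (hgh i)))
  have hinc : ∀ j ≠ i, ¬ U ⊆ g j ∧ ¬ g j ⊆ U := fun j hj => by
    have hij : ¬ g i ⊆ g j := fun hle => hj ((hg.2.2 i j).2 hle).symm
    have hji : ¬ g j ⊆ g i := fun hle => hj ((hg.2.2 j i).2 hle)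
    refine ⟨fun hle => hij (hSU.trans hle), fun hle => ?_⟩
    rcases hle.eq_or_ssubset with heq | hlt
    · exact hij (heq ▸ hSU)
    · exact hji ((subset_unionBelow (hg.mem_of_ne rfl hj) hlt).trans
        (subset_union_left.trans hVS))
  refine antichain3FreeBelow_inf hsat hh ⟨_, (Antichain3.isInducedCopy_update hg i hU
    (fun j hj => hg.mem_of_ne rfl hj) hinc).filter _ fun j => ?_⟩
  rw [Function.update_apply]
  split_ifs
  exacts [hUh, hgh j]

theorem card_sdiff_unionBelow_le (hsat : IsSaturatedFamily (Antichain3 ⊕ₗ Q) 𝒜)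
    (hU : U ∈ 𝒜) (hfree : Antichain3FreeBelow 𝒜 U) :
    #(U \ unionBelow 𝒜 U) ≤ #𝒜 ^ Fintype.card Q + #𝒜 := by
  classical
  obtain ⟨H, hHU, hHcard, hHhit⟩ := exists_card_le_forall_inter_nonempty
    ((inducedCopies Q 𝒜).filter fun h => ¬ U ⊆ univ.inf h) (fun h => U \ univ.inf h)
    fun h hh => sdiff_nonempty.2 (mem_filter.1 hh).2
  have hHU : H ⊆ U := hHU.trans (biUnion_subset.2 fun _ _ => sdiff_subset)
  have hH : ∀ h : Q → Finset (Fin n), IsInducedCopy 𝒜 h → H ⊆ univ.inf h → U ⊆ univ.inf h := by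
    intro h hh hHh
    by_contra hUh
    obtain ⟨x, hx⟩ := hHhit h (mem_filter.2 ⟨mem_inducedCopies.2 hh, hUh⟩)
    exact (Finset.mem_sdiff.1 (mem_inter.1 hx).2).2 (hHh (mem_inter.1 hx).1)
  set R := unionBelow 𝒜 U ∪ H
  have hRU : R ⊆ U := union_subset unionBelow_subset hHU
  have hIcc : #(U \ R) < #𝒜 := calc
    #(U \ R) < 2 ^ #(U \ R) := Nat.lt_two_pow_self
    _ = #(Icc R U) := by rw [card_Icc_finset hRU, card_sdiff_of_subset hRU]
    _ ≤ #𝒜 := card_le_card fun S hS =>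
      mem_of_unionBelow_union_subset hsat hU hfree hH (mem_Icc.1 hS).1 (mem_Icc.1 hS).2
  calc #(U \ unionBelow 𝒜 U) ≤ #(H ∪ U \ R) := card_le_card fun x hx => by
        simp only [R, mem_union, Finset.mem_sdiff] at hx ⊢; tauto
    _ ≤ #H + #(U \ R) := card_union_le _ _
    _ ≤ #𝒜 ^ Fintype.card Q + #𝒜 := by
        gcongr
        exact hHcard.trans ((card_filter_le _ _).trans (card_inducedCopies_le 𝒜))

theorem card_le_of_antichain3FreeBelow (hsat : IsSaturatedFamily (Antichain3 ⊕ₗ Q) 𝒜)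
    (hU : U ∈ 𝒜) (hfree : Antichain3FreeBelow 𝒜 U) :
    #U ≤ #𝒜 * (#𝒜 ^ Fintype.card Q + #𝒜) := calc
  #U ≤ ∑ B ∈ 𝒜.filter (· ⊆ U), #(B \ unionBelow 𝒜 B) :=
    (card_le_card (subset_biUnion_sdiff_unionBelow hU)).trans card_biUnion_le
  _ ≤ #(𝒜.filter (· ⊆ U)) * (#𝒜 ^ Fintype.card Q + #𝒜) := by
    refine sum_le_card_nsmul _ _ _ fun (B : Finset (Fin n)) hB => ?_
    obtain ⟨hB, hBU⟩ := mem_filter.1 hB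
    exact card_sdiff_unionBelow_le hsat hB (hfree.mono hBU)
  _ ≤ #𝒜 * (#𝒜 ^ Fintype.card Q + #𝒜) :=
    Nat.mul_le_mul_right _ (card_filter_le _ _)

end Saturated

section Bound

variable {n : ℕ}

/-- Delete from `[n]` one point of a member of every antichain of size three. -/
theorem exists_antichain3FreeBelow_le_card (𝒜 : Finset (Finset (Fin n))) :
    ∃ W, Antichain3FreeBelow 𝒜 W ∧ n ≤ #W + #𝒜 ^ 3 := by
  have hne : ∀ g ∈ inducedCopies Antichain3 𝒜, (g default).Nonempty := fun g hg => by
    obtain ⟨j, hj⟩ := exists_not_le (default : Antichain3)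
    refine nonempty_iff_ne_empty.2 fun h0 => hj (Antichain3.le_iff_eq.2 ?_)
    have hle := ((mem_inducedCopies.1 hg).2.2 _ _).2 (h0 ▸ empty_subset (g j))
    exact (Antichain3.le_iff_eq.1 hle).symm
  obtain ⟨H, -, hHcard, hHhit⟩ := exists_card_le_forall_inter_nonempty _ _ hne
  refine ⟨univ \ H, fun ⟨g, hg⟩ => ?_, ?_⟩
  · obtain ⟨x, hx⟩ := hHhit g (mem_inducedCopies.2 (hg.mono (filter_subset _ _)))
    have hxW := (mem_filter.1 (hg.2.1 default)).2 (mem_inter.1 hx).2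
    exact (Finset.mem_sdiff.1 hxW).2 (mem_inter.1 hx).1
  · have := card_inducedCopies_le (α := Antichain3) 𝒜
    rw [card_univ_sdiff, Fintype.card_fin, Antichain3.card] at *
    omega

theorem le_of_isSaturatedFamily {Q : Type*} [PartialOrder Q] [Fintype Q]
    {𝒜 : Finset (Finset (Fin n))} (hsat : IsSaturatedFamily (Antichain3 ⊕ₗ Q) 𝒜) :
    n ≤ #𝒜 ^ 3 + #𝒜 * (#𝒜 ^ Fintype.card Q + #𝒜) := by
  obtain ⟨W, hW, hnW⟩ := exists_antichain3FreeBelow_le_card 𝒜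
  obtain ⟨M, hWM, hM⟩ := exists_maximal_ge_of_wellFoundedGT _ W hW
  have := card_le_of_antichain3FreeBelow hsat (mem_of_maximal_antichain3FreeBelow hsat hM) hM.1
  have := card_le_card hWM
  omega

end Bound

theorem exists_isSaturatedFamily (α : Type*) [PartialOrder α] [Nonempty α] (n : ℕ) :
    ∃ 𝒜 : Finset (Finset (Fin n)), IsSaturatedFamily α 𝒜 := by
  have hempty : ¬ ContainsCopy α (∅ : Finset (Finset (Fin n))) := fun ⟨f, hf⟩ =>
    notMem_empty _ (hf.2.1 (Classical.arbitrary α))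
  obtain ⟨𝒜, -, h𝒜⟩ :=
    exists_maximal_ge_of_wellFoundedGT (fun 𝒜 => ¬ ContainsCopy α 𝒜) ∅ hempty
  exact ⟨𝒜, h𝒜.1, fun S hS => not_not.1 fun h => hS
    (h𝒜.2 h (subset_insert S 𝒜) (mem_insert_self S 𝒜))⟩

theorem exists_isSaturatedFamily_card_eq_satStar (α : Type*) [PartialOrder α] [Nonempty α]
    (n : ℕ) : ∃ 𝒜 : Finset (Finset (Fin n)), IsSaturatedFamily α 𝒜 ∧ #𝒜 = satStar α n := by
  obtain ⟨𝒜, h⟩ := exists_isSaturatedFamily α n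
  exact Nat.sInf_mem
    (s := {k | ∃ 𝒜 : Finset (Finset (Fin n)), IsSaturatedFamily α 𝒜 ∧ #𝒜 = k}) ⟨_, 𝒜, h, rfl⟩

/-- `Q * A₃` is encoded as `Antichain3 ⊕ₗ Q`, with `A₃` at the bottom. -/
theorem statement19 (Q : Type*) [PartialOrder Q] [Fintype Q] :
    Tendsto (fun n => satStar (Antichain3 ⊕ₗ Q) n) atTop atTop := by
  set F : ℕ → ℕ := fun m => m ^ 3 + m * (m ^ Fintype.card Q + m)
  have hF : Monotone F := fun a b hab => by simp only [F]; gcongr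
  refine tendsto_atTop_atTop.2 fun K => ⟨F K + 1, fun n hn => ?_⟩
  obtain ⟨𝒜, hsat, hcard⟩ := exists_isSaturatedFamily_card_eq_satStar (Antichain3 ⊕ₗ Q) n
  by_contra! hlt
  have := hF (hcard ▸ hlt.le)
  exact (le_of_isSaturatedFamily hsat).not_gt (by simp only [F] at *; omega)
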